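/- arXiv:1612.06603 — 4 statements merged into one kernel-verified Lean document; each statement's English description precedes it below -/
import Mathlib

section
/- There exist three soft sets (F,A), (G,B), (H,C) over a universe of 5 elements and parameter set of 3 elements such that the Euclidean soft-set distance e((F,A),(H,C)) > e((F,A),(G,B)) + e((G,B),(H,C)); that is, e fails the triangle inequality. Concretely, with F(α₁)={x₁,x₂} on A={α₁}; G(α₂)={x₂,x₃}, G(α₃)={x₁,x₄} on B={α₂,α₃}; H(α₁)={x₃,x₄,x₅}, H(α₂)={x₂,x₃}, H(α₃)={x₁,x₃,x₄} on C={α₁,α₂,α₃}, one has e((F,A),(G,B))=3, e((G,B),(H,C))=2, e((F,A),(H,C))=7. -/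
/-!
When the parameter sets are disjoint, `e` sees only `|A Δ B|` and nothing of the values of
`F` and `G`. Since `A = {α₁}` and `B = {α₂, α₃}` are disjoint, the path through `(G, B)` never
pays for the five points in which `F α₁` and `H α₁` differ, which `e((F,A),(H,C))` counts in full.
-/

/-- Euclidean distance between soft sets over universe `X` and parameter type `P`. -/
noncomputable def softEuclDist {X P : Type*} [DecidableEq X] [DecidableEq P]
    (F : P → Finset X) (A : Finset P) (G : P → Finset X) (B : Finset P) : ℝ :=
  ((symmDiff A B).card : ℝ) +
    Real.sqrt (∑ α ∈ A ∩ B, ((symmDiff (F α) (G α)).card : ℝ) ^ 2)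

theorem softEuclDist_eq_of_card_symmDiff_of_sum_sq {X P : Type*} [DecidableEq X] [DecidableEq P]
    {F G : P → Finset X} {A B : Finset P} {n d : ℕ} (hn : (symmDiff A B).card = n)
    (hd : ∑ α ∈ A ∩ B, (symmDiff (F α) (G α)).card ^ 2 = d ^ 2) :
    softEuclDist F A G B = n + d := by
  have hd' : ∑ α ∈ A ∩ B, ((symmDiff (F α) (G α)).card : ℝ) ^ 2 = (d : ℝ) ^ 2 := by
    exact_mod_cast hd
  rw [softEuclDist, hn, hd', Real.sqrt_sq d.cast_nonneg]

theorem euclidean_soft_distance_fails_triangle :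
    ∃ (F G H : Fin 3 → Finset (Fin 5)) (A B C : Finset (Fin 3)),
      A = {0} ∧ B = {1, 2} ∧ C = {0, 1, 2} ∧
      F 0 = {0, 1} ∧
      G 1 = {1, 2} ∧ G 2 = {0, 3} ∧
      H 0 = {2, 3, 4} ∧ H 1 = {1, 2} ∧ H 2 = {0, 2, 3} ∧
      softEuclDist F A G B = 3 ∧
      softEuclDist G B H C = 2 ∧
      softEuclDist F A H C = 7 ∧
      softEuclDist F A H C > softEuclDist F A G B + softEuclDist G B H C := by
  refine ⟨![{0, 1}, ∅, ∅], ![∅, {1, 2}, {0, 3}], ![{2, 3, 4}, {1, 2}, {0, 2, 3}],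
    {0}, {1, 2}, {0, 1, 2}, rfl, rfl, rfl, rfl, rfl, rfl, rfl, rfl, rfl, ?_⟩
  -- each rewrite hits the first remaining distance: `e(F,G)`, then `e(G,H)`, then `e(F,H)`
  rw [softEuclDist_eq_of_card_symmDiff_of_sum_sq (n := 3) (d := 0) (by decide) (by decide),
    softEuclDist_eq_of_card_symmDiff_of_sum_sq (n := 1) (d := 1) (by decide) (by decide),
    softEuclDist_eq_of_card_symmDiff_of_sum_sq (n := 2) (d := 5) (by decide) (by decide)]
  norm_num
end

section
/- If type-2 soft sets satisfy [F,A] ⊑ [G,B] ⊑ [H,C] (nested containment), then the parameter-based type-2 distance is additive: D_p([F,A],[H,C]) = D_p([F,A],[G,B]) + D_p([G,B],[H,C]). -/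
/-- Containment of type-2 soft sets: `A ⊆ B`, each underlying parameter set grows,
and the value-maps agree on the smaller domain. -/
def T2Contained {X P Q : Type*}
    (A : Finset P) (EA : P → Finset Q) (F : P → Q → Finset X)
    (B : Finset P) (EB : P → Finset Q) (G : P → Q → Finset X) : Prop :=
  A ⊆ B ∧ ∀ α ∈ A, EA α ⊆ EB α ∧ ∀ β ∈ EA α, F α β = G α β

/-- Parameter-based distance between type-2 soft sets. -/
def Dp {X P Q : Type*} [DecidableEq X] [DecidableEq P] [DecidableEq Q]
    (A : Finset P) (EA : P → Finset Q) (F : P → Q → Finset X)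
    (B : Finset P) (EB : P → Finset Q) (G : P → Q → Finset X) : ℤ :=
  (((A ∪ B).card : ℤ) - (A ∩ B).card) +
    (((A.biUnion EA ∪ B.biUnion EB).card : ℤ) - (A.biUnion EA ∩ B.biUnion EB).card) +
    (((A.biUnion (fun α => (EA α).image (F α)) ∪ B.biUnion (fun α => (EB α).image (G α))).card : ℤ) -
      (A.biUnion (fun α => (EA α).image (F α)) ∩ B.biUnion (fun α => (EB α).image (G α))).card)

private lemma card_sub_of_subset {P : Type*} [DecidableEq P] {S T : Finset P} (h : S ⊆ T) :
    ((S ∪ T).card : ℤ) - (S ∩ T).card = (T.card : ℤ) - S.card := by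
  rw [Finset.union_eq_right.mpr h, Finset.inter_eq_left.mpr h]

private lemma biUnion_E_subset {P Q : Type*} [DecidableEq P] [DecidableEq Q]
    {A B : Finset P} {EA EB : P → Finset Q}
    (hAB : A ⊆ B) (h : ∀ α ∈ A, EA α ⊆ EB α) :
    A.biUnion EA ⊆ B.biUnion EB := by
  intro x hx
  rcases Finset.mem_biUnion.mp hx with ⟨α, hα, hxα⟩
  exact Finset.mem_biUnion.mpr ⟨α, hAB hα, h α hα hxα⟩

private lemma biUnion_img_subset {X P Q : Type*} [DecidableEq X] [DecidableEq P] [DecidableEq Q]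
    {A B : Finset P} {EA EB : P → Finset Q} {F G : P → Q → Finset X}
    (h : T2Contained A EA F B EB G) :
    A.biUnion (fun α => (EA α).image (F α)) ⊆ B.biUnion (fun α => (EB α).image (G α)) := by
  intro x hx
  rcases Finset.mem_biUnion.mp hx with ⟨α, hα, hxα⟩
  rcases Finset.mem_image.mp hxα with ⟨β, hβ, hfb⟩
  refine Finset.mem_biUnion.mpr ⟨α, h.1 hα, Finset.mem_image.mpr ⟨β, (h.2 α hα).1 hβ, ?_⟩⟩
  rw [← (h.2 α hα).2 β hβ, hfb]

theorem Dp_additive_of_nested {X P Q : Type*} [DecidableEq X] [DecidableEq P] [DecidableEq Q]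
    (A B C : Finset P) (EA EB EC : P → Finset Q) (F G H : P → Q → Finset X)
    (h₁ : T2Contained A EA F B EB G) (h₂ : T2Contained B EB G C EC H) :
    Dp A EA F C EC H = Dp A EA F B EB G + Dp B EB G C EC H := by
  have hAB := h₁.1
  have hBC := h₂.1
  have hAC : A ⊆ C := hAB.trans hBC
  have hE1 := biUnion_E_subset hAB (fun α hα => (h₁.2 α hα).1)
  have hE2 := biUnion_E_subset hBC (fun α hα => (h₂.2 α hα).1)
  have hE3 := hE1.trans hE2
  have hI1 := biUnion_img_subset h₁
  have hI2 := biUnion_img_subset h₂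
  have hI3 := hI1.trans hI2
  unfold Dp
  rw [card_sub_of_subset hAB, card_sub_of_subset hBC, card_sub_of_subset hAC,
    card_sub_of_subset hE1, card_sub_of_subset hE2, card_sub_of_subset hE3,
    card_sub_of_subset hI1, card_sub_of_subset hI2, card_sub_of_subset hI3]
  ring
end

section
/- If [F,A] ⊑ [G,B] ⊑ [H,C] are nested type-2 soft sets, then the matrix-representation based type-2 distance is additive: D_m([F,A],[H,C]) = D_m([F,A],[G,B]) + D_m([G,B],[H,C]). -/
/-- Matrix-representation based distance between type-2 soft sets. -/
def Dm {X P Q : Type*} [Fintype X] [DecidableEq X] [DecidableEq P] [DecidableEq Q]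
    (A : Finset P) (EA : P → Finset Q) (F : P → Q → Finset X)
    (B : Finset P) (EB : P → Finset Q) (G : P → Q → Finset X) : ℤ :=
  (((A ∪ B).card : ℤ) - (A ∩ B).card) +
    (((A.biUnion EA ∪ B.biUnion EB).card : ℤ) - (A.biUnion EA ∩ B.biUnion EB).card) +
    ∑ α ∈ A ∩ B, ∑ β ∈ EA α ∩ EB α, ∑ x : X,
      |(if x ∈ F α β then (1 : ℤ) else 0) - (if x ∈ G α β then (1 : ℤ) else 0)|

lemma sum_zero_of_eq {X P Q : Type*} [Fintype X] [DecidableEq X] [DecidableEq P]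
    [DecidableEq Q] (A B : Finset P) (EA EB : P → Finset Q) (F G : P → Q → Finset X)
    (h : ∀ α ∈ A ∩ B, ∀ β ∈ EA α ∩ EB α, F α β = G α β) :
    (∑ α ∈ A ∩ B, ∑ β ∈ EA α ∩ EB α, ∑ x : X,
      |(if x ∈ F α β then (1 : ℤ) else 0) - (if x ∈ G α β then (1 : ℤ) else 0)|) = 0 := by
  refine Finset.sum_eq_zero fun α hα => Finset.sum_eq_zero fun β hβ =>
    Finset.sum_eq_zero fun x _ => ?_
  rw [h α hα β hβ]
  simp

theorem Dm_additive_of_nested {X P Q : Type*} [Fintype X] [DecidableEq X] [DecidableEq P]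
    [DecidableEq Q]
    (A B C : Finset P) (EA EB EC : P → Finset Q) (F G H : P → Q → Finset X)
    (h₁ : T2Contained A EA F B EB G) (h₂ : T2Contained B EB G C EC H) :
    Dm A EA F C EC H = Dm A EA F B EB G + Dm B EB G C EC H := by
  obtain ⟨hAB, hF⟩ := h₁
  obtain ⟨hBC, hG⟩ := h₂
  have hAC : A ⊆ C := hAB.trans hBC
  have hE1 : A.biUnion EA ⊆ B.biUnion EB := by
    intro q hq
    rw [Finset.mem_biUnion] at hq ⊢
    obtain ⟨α, hα, hqα⟩ := hq
    exact ⟨α, hAB hα, (hF α hα).1 hqα⟩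
  have hE2 : B.biUnion EB ⊆ C.biUnion EC := by
    intro q hq
    rw [Finset.mem_biUnion] at hq ⊢
    obtain ⟨α, hα, hqα⟩ := hq
    exact ⟨α, hBC hα, (hG α hα).1 hqα⟩
  have hE3 : A.biUnion EA ⊆ C.biUnion EC := hE1.trans hE2
  have s1 : (∑ α ∈ A ∩ C, ∑ β ∈ EA α ∩ EC α, ∑ x : X,
      |(if x ∈ F α β then (1 : ℤ) else 0) - (if x ∈ H α β then (1 : ℤ) else 0)|) = 0 := by
    refine sum_zero_of_eq A C EA EC F H fun α hα β hβ => ?_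
    have hαA := (Finset.mem_inter.mp hα).1
    have hβA := (Finset.mem_inter.mp hβ).1
    rw [(hF α hαA).2 β hβA, (hG α (hAB hαA)).2 β ((hF α hαA).1 hβA)]
  have s2 : (∑ α ∈ A ∩ B, ∑ β ∈ EA α ∩ EB α, ∑ x : X,
      |(if x ∈ F α β then (1 : ℤ) else 0) - (if x ∈ G α β then (1 : ℤ) else 0)|) = 0 := by
    refine sum_zero_of_eq A B EA EB F G fun α hα β hβ => ?_
    exact (hF α (Finset.mem_inter.mp hα).1).2 β (Finset.mem_inter.mp hβ).1
  have s3 : (∑ α ∈ B ∩ C, ∑ β ∈ EB α ∩ EC α, ∑ x : X,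
      |(if x ∈ G α β then (1 : ℤ) else 0) - (if x ∈ H α β then (1 : ℤ) else 0)|) = 0 := by
    refine sum_zero_of_eq B C EB EC G H fun α hα β hβ => ?_
    exact (hG α (Finset.mem_inter.mp hα).1).2 β (Finset.mem_inter.mp hβ).1
  unfold Dm
  rw [s1, s2, s3,
    Finset.union_eq_right.mpr hAB, Finset.inter_eq_left.mpr hAB,
    Finset.union_eq_right.mpr hBC, Finset.inter_eq_left.mpr hBC,
    Finset.union_eq_right.mpr hAC, Finset.inter_eq_left.mpr hAC,
    Finset.union_eq_right.mpr hE1, Finset.inter_eq_left.mpr hE1,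
    Finset.union_eq_right.mpr hE2, Finset.inter_eq_left.mpr hE2,
    Finset.union_eq_right.mpr hE3, Finset.inter_eq_left.mpr hE3]
  ring
end

section
/- If [F,A] ⊑ [G,B] ⊑ [H,C] are nested type-2 soft sets with A nonempty and all relevant value-sets nonempty, then the type-2 similarity satisfies S_m([F,A],[H,C]) ≤ min(S_m([F,A],[G,B]), S_m([G,B],[H,C])). -/
/-- Similarity between the type-1 soft sets at primary parameter `α`. -/
noncomputable def Salpha {X P Q : Type*} [DecidableEq X] [DecidableEq Q]
    (EA EB : P → Finset Q) (F G : P → Q → Finset X) (α : P) : ℝ :=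
  (1 / ((EA α ∪ EB α).card : ℝ)) *
    ∑ β ∈ EA α ∩ EB α, ((F α β ∩ G α β).card : ℝ) / ((F α β ∪ G α β).card : ℝ)

/-- Real-valued similarity measure between type-2 soft sets. -/
noncomputable def Sm {X P Q : Type*} [DecidableEq X] [DecidableEq P] [DecidableEq Q]
    (A : Finset P) (EA : P → Finset Q) (F : P → Q → Finset X)
    (B : Finset P) (EB : P → Finset Q) (G : P → Q → Finset X) : ℝ :=
  (1 / ((A ∪ B).card : ℝ)) * ∑ α ∈ A ∩ B, Salpha EA EB F G α

theorem Sm_nested {X P Q : Type*} [DecidableEq X] [DecidableEq P] [DecidableEq Q]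
    (A B C : Finset P) (EA EB EC : P → Finset Q) (F G H : P → Q → Finset X)
    (hA : A.Nonempty)
    (hAB : A ⊆ B) (hBC : B ⊆ C)
    (hEAB : ∀ α ∈ A, EA α ⊆ EB α) (hEBC : ∀ α ∈ B, EB α ⊆ EC α)
    (hFG : ∀ α ∈ A, ∀ β ∈ EA α, F α β = G α β)
    (hGH : ∀ α ∈ B, ∀ β ∈ EB α, G α β = H α β)
    (hFne : ∀ α ∈ A, ∀ β ∈ EA α, (F α β).Nonempty)
    (hGne : ∀ α ∈ B, ∀ β ∈ EB α, (G α β).Nonempty)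
    (hHne : ∀ α ∈ C, ∀ β ∈ EC α, (H α β).Nonempty) :
    Sm A EA F C EC H ≤ min (Sm A EA F B EB G) (Sm B EB G C EC H) := by
  have key : ∀ (EA EB : P → Finset Q) (F G : P → Q → Finset X) (α : P),
      EA α ⊆ EB α → (∀ β ∈ EA α, F α β = G α β) → (∀ β ∈ EA α, (F α β).Nonempty) →
      Salpha EA EB F G α = ((EA α).card : ℝ) / ((EB α).card : ℝ) := by
    intro EA EB F G α hE hfg hne
    unfold Salpha
    rw [Finset.inter_eq_left.mpr hE, Finset.union_eq_right.mpr hE]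
    have h1 : ∀ β ∈ EA α, ((F α β ∩ G α β).card : ℝ) / ((F α β ∪ G α β).card : ℝ) = 1 := by
      intro β hβ
      rw [← hfg β hβ, Finset.inter_self, Finset.union_self]
      exact div_self (by exact_mod_cast Finset.card_ne_zero_of_mem (hne β hβ).choose_spec)
    rw [Finset.sum_congr rfl h1, Finset.sum_const, nsmul_eq_mul, mul_one]
    ring
  have hAC : A ⊆ C := hAB.trans hBC
  have hSm1 : Sm A EA F B EB G = (1 / (B.card : ℝ)) * ∑ α ∈ A, ((EA α).card : ℝ) / ((EB α).card : ℝ) := by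
    unfold Sm
    rw [Finset.inter_eq_left.mpr hAB, Finset.union_eq_right.mpr hAB]
    congr 1
    exact Finset.sum_congr rfl fun α hα => key _ _ _ _ α (hEAB α hα) (hFG α hα) (hFne α hα)
  have hSm2 : Sm B EB G C EC H = (1 / (C.card : ℝ)) * ∑ α ∈ B, ((EB α).card : ℝ) / ((EC α).card : ℝ) := by
    unfold Sm
    rw [Finset.inter_eq_left.mpr hBC, Finset.union_eq_right.mpr hBC]
    congr 1
    exact Finset.sum_congr rfl fun α hα => key _ _ _ _ α (hEBC α hα) (hGH α hα) (hGne α hα)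
  have hSm3 : Sm A EA F C EC H = (1 / (C.card : ℝ)) * ∑ α ∈ A, ((EA α).card : ℝ) / ((EC α).card : ℝ) := by
    unfold Sm
    rw [Finset.inter_eq_left.mpr hAC, Finset.union_eq_right.mpr hAC]
    congr 1
    refine Finset.sum_congr rfl fun α hα => key _ _ _ _ α ((hEAB α hα).trans (hEBC α (hAB hα))) ?_ (hFne α hα)
    intro β hβ
    rw [hFG α hα β hβ, hGH α (hAB hα) β (hEAB α hα hβ)]
  have hBpos : (0 : ℝ) < B.card := by
    exact_mod_cast Finset.card_pos.mpr (hA.mono hAB)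
  have hCpos : (0 : ℝ) < C.card := by
    exact_mod_cast Finset.card_pos.mpr (hA.mono hAC)
  refine le_min ?_ ?_
  · rw [hSm1, hSm3]
    refine mul_le_mul ?_ ?_ ?_ (by positivity)
    · apply one_div_le_one_div_of_le hBpos
      exact_mod_cast Finset.card_le_card hBC
    · refine Finset.sum_le_sum fun α hα => ?_
      by_cases h : (EB α).card = 0
      · have : (EA α).card = 0 := le_antisymm (h ▸ Finset.card_le_card (hEAB α hα)) (Nat.zero_le _)
        simp [this]
      · apply div_le_div_of_nonneg_left (by positivity) (by positivity)
        exact_mod_cast Finset.card_le_card (hEBC α (hAB hα))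
    · apply Finset.sum_nonneg
      intro α _
      positivity
  · rw [hSm2, hSm3]
    refine mul_le_mul_of_nonneg_left ?_ (by positivity)
    calc ∑ α ∈ A, ((EA α).card : ℝ) / ((EC α).card : ℝ)
        ≤ ∑ α ∈ A, ((EB α).card : ℝ) / ((EC α).card : ℝ) := by
          refine Finset.sum_le_sum fun α hα => ?_
          by_cases h : ((EC α).card : ℝ) = 0
          · simp [h]
          · rw [div_le_div_iff_of_pos_right (lt_of_le_of_ne (by positivity) (Ne.symm h))]
            exact_mod_cast Finset.card_le_card (hEAB α hα)
      _ ≤ ∑ α ∈ B, ((EB α).card : ℝ) / ((EC α).card : ℝ) := by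
          refine Finset.sum_le_sum_of_subset_of_nonneg hAB fun α _ _ => by positivity
end
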